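/- Pattern equivalence is compatible with disjoint union of labeled collections: if p₁ ⊑ v₁, p₂ ⊑ v₂, v₁ ∼_{p₁} v₁', and v₂ ∼_{p₂} v₂', then v₁ ⊎ v₂ ∼_{p₁ ⊎ p₂} v₁' ⊎ v₂', provided all the disjoint unions are defined. -/

import Mathlib

abbrev Label := List ℕ
abbrev FName := String

/-- Values: constants, records, and labeled collections
(finite maps from labels to values, represented as association lists). -/
inductive Value : Type where
  | int : ℤ → Value
  | bool : Bool → Value
  | record : List (FName × Value) → Value
  | coll : List (Label × Value) → Value

/-- `ℓ · v` : prepend `ℓ` to every label of a labeled collection. -/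
def relabel (ℓ : Label) (ws : List (Label × Value)) : List (Label × Value) :=
  ws.map fun q => (ℓ ++ q.1, q.2)

def IsPrefixCode (L : Set Label) : Prop :=
  ∀ x ∈ L, ∀ y ∈ L, x <+: y → x = y

def PrefixDisjoint (L₁ L₂ : Set Label) : Prop :=
  (∀ x ∈ L₁, ∀ y ∈ L₂, ¬ x <+: y) ∧ (∀ x ∈ L₂, ∀ y ∈ L₁, ¬ x <+: y)

def domOf {β : Type*} (ws : List (Label × β)) : Set Label :=
  {ℓ | ∃ b, (ℓ, b) ∈ ws}

def SubPrefixCode (L' L : Set Label) : Prop :=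
  IsPrefixCode L' ∧ ∀ x ∈ L, ∃ y ∈ L', y <+: x

/-- Enriched patterns: holes □, equality markers ◇, constants, complete and
partial record patterns, and complete and partial set patterns
(`collHole ps` is `{ℓᵢ.pᵢ} ∪̇ □`, `collDiamond ps` is `{ℓᵢ.pᵢ} ∪̇ ◇`,
and similarly for records). -/
inductive Pattern : Type where
  | hole : Pattern
  | diamond : Pattern
  | int : ℤ → Pattern
  | bool : Bool → Pattern
  | rcd : List (FName × Pattern) → Pattern
  | rcdHole : List (FName × Pattern) → Pattern
  | rcdDiamond : List (FName × Pattern) → Pattern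
  | coll : List (Label × Pattern) → Pattern
  | collHole : List (Label × Pattern) → Pattern
  | collDiamond : List (Label × Pattern) → Pattern

namespace Pattern

/-- The substitution `p[◇/□]`, replacing every hole by ◇. -/
def subst : Pattern → Pattern
  | .hole => .diamond
  | .diamond => .diamond
  | .int n => .int n
  | .bool b => .bool b
  | .rcd ps => .rcd (ps.attach.map fun q => (q.1.1, subst q.1.2))
  | .rcdHole ps => .rcdDiamond (ps.attach.map fun q => (q.1.1, subst q.1.2))
  | .rcdDiamond ps => .rcdDiamond (ps.attach.map fun q => (q.1.1, subst q.1.2))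
  | .coll ps => .coll (ps.attach.map fun q => (q.1.1, subst q.1.2))
  | .collHole ps => .collDiamond (ps.attach.map fun q => (q.1.1, subst q.1.2))
  | .collDiamond ps => .collDiamond (ps.attach.map fun q => (q.1.1, subst q.1.2))
decreasing_by
  all_goals
    have h := List.sizeOf_lt_of_mem q.2
    simp only [Pattern.rcd.sizeOf_spec, Pattern.rcdHole.sizeOf_spec,
      Pattern.rcdDiamond.sizeOf_spec, Pattern.coll.sizeOf_spec,
      Pattern.collHole.sizeOf_spec, Pattern.collDiamond.sizeOf_spec]
    have h2 : sizeOf (q.1.2) < sizeOf q.1 := by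
      obtain ⟨⟨a, b⟩, _⟩ := q
      simp
    omega

end Pattern

/-! The matching relation `p ⊑ v` (pattern `p` matches value `v`). -/
mutual
inductive Matches : Pattern → Value → Prop where
  | hole : ∀ {v}, Matches .hole v
  | diamond : ∀ {v}, Matches .diamond v
  | int : ∀ {n}, Matches (.int n) (.int n)
  | bool : ∀ {b}, Matches (.bool b) (.bool b)
  | rcd : ∀ {ps vs}, MatchesListF ps vs → Matches (.rcd ps) (.record vs)
  | rcdHole : ∀ {ps vs}, MatchesSubF ps vs → Matches (.rcdHole ps) (.record vs)
  | rcdDiamond : ∀ {ps vs}, MatchesSubF ps vs → Matches (.rcdDiamond ps) (.record vs)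
  | coll : ∀ {ps ws}, MatchesListC ps ws → Matches (.coll ps) (.coll ws)
  | collHole : ∀ {ps ws}, MatchesSubC ps ws → Matches (.collHole ps) (.coll ws)
  | collDiamond : ∀ {ps ws}, MatchesSubC ps ws → Matches (.collDiamond ps) (.coll ws)

inductive MatchesListF : List (FName × Pattern) → List (FName × Value) → Prop where
  | nil : MatchesListF [] []
  | cons : ∀ {A p ps v vs}, Matches p v → MatchesListF ps vs →
      MatchesListF ((A, p) :: ps) ((A, v) :: vs)

/-- Matching of a partial record/set pattern: the listed components match,
and the value may have further components. -/
inductive MatchesSubF : List (FName × Pattern) → List (FName × Value) → Prop where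
  | nil : MatchesSubF [] []
  | skip : ∀ {ps A v vs}, MatchesSubF ps vs → MatchesSubF ps ((A, v) :: vs)
  | cons : ∀ {A p ps v vs}, Matches p v → MatchesSubF ps vs →
      MatchesSubF ((A, p) :: ps) ((A, v) :: vs)

inductive MatchesListC : List (Label × Pattern) → List (Label × Value) → Prop where
  | nil : MatchesListC [] []
  | cons : ∀ {ℓ p ps v ws}, Matches p v → MatchesListC ps ws →
      MatchesListC ((ℓ, p) :: ps) ((ℓ, v) :: ws)

inductive MatchesSubC : List (Label × Pattern) → List (Label × Value) → Prop where
  | nil : MatchesSubC [] []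
  | skip : ∀ {ps ℓ v ws}, MatchesSubC ps ws → MatchesSubC ps ((ℓ, v) :: ws)
  | cons : ∀ {ℓ p ps v ws}, Matches p v → MatchesSubC ps ws →
      MatchesSubC ((ℓ, p) :: ps) ((ℓ, v) :: ws)
end

/-! The relation `v ∼_p v'` (values `v` and `v'` are equal modulo pattern `p`,
Figure 8). -/
mutual
inductive Sim : Pattern → Value → Value → Prop where
  | hole : ∀ {v v'}, Sim .hole v v'
  | diamond : ∀ {v}, Sim .diamond v v
  | int : ∀ {n}, Sim (.int n) (.int n) (.int n)
  | bool : ∀ {b}, Sim (.bool b) (.bool b) (.bool b)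
  | rcd : ∀ {ps vs vs'}, SimListF ps vs vs' → Sim (.rcd ps) (.record vs) (.record vs')
  | rcdHole : ∀ {ps vs vs'}, SimSubF ps vs vs' →
      Sim (.rcdHole ps) (.record vs) (.record vs')
  | rcdDiamond : ∀ {ps vs vs'}, SimSubEqF ps vs vs' →
      Sim (.rcdDiamond ps) (.record vs) (.record vs')
  | coll : ∀ {ps ws ws'}, SimListC ps ws ws' → Sim (.coll ps) (.coll ws) (.coll ws')
  | collHole : ∀ {ps ws ws'}, SimSubC ps ws ws' →
      Sim (.collHole ps) (.coll ws) (.coll ws')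
  | collDiamond : ∀ {ps ws ws'}, SimSubEqC ps ws ws' →
      Sim (.collDiamond ps) (.coll ws) (.coll ws')

inductive SimListF : List (FName × Pattern) → List (FName × Value) →
    List (FName × Value) → Prop where
  | nil : SimListF [] [] []
  | cons : ∀ {A p ps v v' vs vs'}, Sim p v v' → SimListF ps vs vs' →
      SimListF ((A, p) :: ps) ((A, v) :: vs) ((A, v') :: vs')

/-- Partial pattern with □ remainder: the listed components are related
pointwise and the remaining components on both sides are arbitrary. -/
inductive SimSubF : List (FName × Pattern) → List (FName × Value) →
    List (FName × Value) → Prop where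
  | nil : SimSubF [] [] []
  | skipL : ∀ {ps A v vs vs'}, SimSubF ps vs vs' → SimSubF ps ((A, v) :: vs) vs'
  | skipR : ∀ {ps A v' vs vs'}, SimSubF ps vs vs' → SimSubF ps vs ((A, v') :: vs')
  | cons : ∀ {A p ps v v' vs vs'}, Sim p v v' → SimSubF ps vs vs' →
      SimSubF ((A, p) :: ps) ((A, v) :: vs) ((A, v') :: vs')

/-- Partial pattern with ◇ remainder: the listed components are related
pointwise and the remaining components must be equal. -/
inductive SimSubEqF : List (FName × Pattern) → List (FName × Value) →
    List (FName × Value) → Prop where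
  | nil : SimSubEqF [] [] []
  | skip : ∀ {ps A v vs vs'}, SimSubEqF ps vs vs' →
      SimSubEqF ps ((A, v) :: vs) ((A, v) :: vs')
  | cons : ∀ {A p ps v v' vs vs'}, Sim p v v' → SimSubEqF ps vs vs' →
      SimSubEqF ((A, p) :: ps) ((A, v) :: vs) ((A, v') :: vs')

inductive SimListC : List (Label × Pattern) → List (Label × Value) →
    List (Label × Value) → Prop where
  | nil : SimListC [] [] []
  | cons : ∀ {ℓ p ps v v' ws ws'}, Sim p v v' → SimListC ps ws ws' →
      SimListC ((ℓ, p) :: ps) ((ℓ, v) :: ws) ((ℓ, v') :: ws')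

inductive SimSubC : List (Label × Pattern) → List (Label × Value) →
    List (Label × Value) → Prop where
  | nil : SimSubC [] [] []
  | skipL : ∀ {ps ℓ v ws ws'}, SimSubC ps ws ws' → SimSubC ps ((ℓ, v) :: ws) ws'
  | skipR : ∀ {ps ℓ v' ws ws'}, SimSubC ps ws ws' → SimSubC ps ws ((ℓ, v') :: ws')
  | cons : ∀ {ℓ p ps v v' ws ws'}, Sim p v v' → SimSubC ps ws ws' →
      SimSubC ((ℓ, p) :: ps) ((ℓ, v) :: ws) ((ℓ, v') :: ws')

inductive SimSubEqC : List (Label × Pattern) → List (Label × Value) →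
    List (Label × Value) → Prop where
  | nil : SimSubEqC [] [] []
  | skip : ∀ {ps ℓ v ws ws'}, SimSubEqC ps ws ws' →
      SimSubEqC ps ((ℓ, v) :: ws) ((ℓ, v) :: ws')
  | cons : ∀ {ℓ p ps v v' ws ws'}, Sim p v v' → SimSubEqC ps ws ws' →
      SimSubEqC ((ℓ, p) :: ps) ((ℓ, v) :: ws) ((ℓ, v') :: ws')
end

/-! The least upper bound `p ⊔ p'` of patterns (Figures 6 and 7),
presented as a relation `Lub p p' r` meaning `p ⊔ p' = r`. -/
mutual
inductive Lub : Pattern → Pattern → Pattern → Prop where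
  | holeL : ∀ {p}, Lub .hole p p
  | holeR : ∀ {p}, Lub p .hole p
  | diamondL : ∀ {p}, Lub .diamond p p.subst
  | diamondR : ∀ {p}, Lub p .diamond p.subst
  | int : ∀ {n}, Lub (.int n) (.int n) (.int n)
  | bool : ∀ {b}, Lub (.bool b) (.bool b) (.bool b)
  -- records
  | rcdCC : ∀ {ps qs rs}, LubListF ps qs rs → Lub (.rcd ps) (.rcd qs) (.rcd rs)
  | rcdCH : ∀ {ps qs rs}, LubSubF id ps qs rs →
      Lub (.rcd ps) (.rcdHole qs) (.rcd rs)
  | rcdHC : ∀ {ps qs rs}, LubSubF id qs ps rs →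
      Lub (.rcdHole ps) (.rcd qs) (.rcd rs)
  | rcdCD : ∀ {ps qs rs}, LubSubF Pattern.subst ps qs rs →
      Lub (.rcd ps) (.rcdDiamond qs) (.rcd rs)
  | rcdDC : ∀ {ps qs rs}, LubSubF Pattern.subst qs ps rs →
      Lub (.rcdDiamond ps) (.rcd qs) (.rcd rs)
  | rcdHH : ∀ {ps qs rs}, LubMergeF id id ps qs rs →
      Lub (.rcdHole ps) (.rcdHole qs) (.rcdHole rs)
  | rcdHD : ∀ {ps qs rs}, LubMergeF Pattern.subst id ps qs rs →
      Lub (.rcdHole ps) (.rcdDiamond qs) (.rcdDiamond rs)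
  | rcdDH : ∀ {ps qs rs}, LubMergeF id Pattern.subst ps qs rs →
      Lub (.rcdDiamond ps) (.rcdHole qs) (.rcdDiamond rs)
  | rcdDD : ∀ {ps qs rs}, LubMergeF Pattern.subst Pattern.subst ps qs rs →
      Lub (.rcdDiamond ps) (.rcdDiamond qs) (.rcdDiamond rs)
  -- labeled sets
  | collCC : ∀ {ps qs rs}, LubListC ps qs rs → Lub (.coll ps) (.coll qs) (.coll rs)
  | collCH : ∀ {ps qs rs}, LubSubC id ps qs rs →
      Lub (.coll ps) (.collHole qs) (.coll rs)
  | collHC : ∀ {ps qs rs}, LubSubC id qs ps rs →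
      Lub (.collHole ps) (.coll qs) (.coll rs)
  | collCD : ∀ {ps qs rs}, LubSubC Pattern.subst ps qs rs →
      Lub (.coll ps) (.collDiamond qs) (.coll rs)
  | collDC : ∀ {ps qs rs}, LubSubC Pattern.subst qs ps rs →
      Lub (.collDiamond ps) (.coll qs) (.coll rs)
  | collHH : ∀ {ps qs rs}, LubMergeC id id ps qs rs →
      Lub (.collHole ps) (.collHole qs) (.collHole rs)
  | collHD : ∀ {ps qs rs}, LubMergeC Pattern.subst id ps qs rs →
      Lub (.collHole ps) (.collDiamond qs) (.collDiamond rs)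
  | collDH : ∀ {ps qs rs}, LubMergeC id Pattern.subst ps qs rs →
      Lub (.collDiamond ps) (.collHole qs) (.collDiamond rs)
  | collDD : ∀ {ps qs rs}, LubMergeC Pattern.subst Pattern.subst ps qs rs →
      Lub (.collDiamond ps) (.collDiamond qs) (.collDiamond rs)

/-- Pointwise lub of complete pattern lists (same domain). -/
inductive LubListF : List (FName × Pattern) → List (FName × Pattern) →
    List (FName × Pattern) → Prop where
  | nil : LubListF [] [] []
  | cons : ∀ {A p q r ps qs rs}, Lub p q r → LubListF ps qs rs →
      LubListF ((A, p) :: ps) ((A, q) :: qs) ((A, r) :: rs)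

/-- Lub of a complete pattern list (first argument) against a partial one
whose components are all among the complete one's; the extra components
of the complete side are transformed by `f` (`id` for □, `·[◇/□]` for ◇). -/
inductive LubSubF : (Pattern → Pattern) → List (FName × Pattern) →
    List (FName × Pattern) → List (FName × Pattern) → Prop where
  | nil : ∀ {f}, LubSubF f [] [] []
  | extra : ∀ {f A p ps qs rs}, LubSubF f ps qs rs →
      LubSubF f ((A, p) :: ps) qs ((A, f p) :: rs)
  | cons : ∀ {f A p q r ps qs rs}, Lub p q r → LubSubF f ps qs rs →
      LubSubF f ((A, p) :: ps) ((A, q) :: qs) ((A, r) :: rs)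

/-- Lub of two partial pattern lists: shared components are combined with
`Lub`, extra components on the left/right are transformed by `f`/`g`. -/
inductive LubMergeF : (Pattern → Pattern) → (Pattern → Pattern) →
    List (FName × Pattern) → List (FName × Pattern) →
    List (FName × Pattern) → Prop where
  | nil : ∀ {f g}, LubMergeF f g [] [] []
  | left : ∀ {f g A p ps qs rs}, LubMergeF f g ps qs rs →
      LubMergeF f g ((A, p) :: ps) qs ((A, f p) :: rs)
  | right : ∀ {f g A q ps qs rs}, LubMergeF f g ps qs rs →
      LubMergeF f g ps ((A, q) :: qs) ((A, g q) :: rs)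
  | both : ∀ {f g A p q r ps qs rs}, Lub p q r → LubMergeF f g ps qs rs →
      LubMergeF f g ((A, p) :: ps) ((A, q) :: qs) ((A, r) :: rs)

inductive LubListC : List (Label × Pattern) → List (Label × Pattern) →
    List (Label × Pattern) → Prop where
  | nil : LubListC [] [] []
  | cons : ∀ {ℓ p q r ps qs rs}, Lub p q r → LubListC ps qs rs →
      LubListC ((ℓ, p) :: ps) ((ℓ, q) :: qs) ((ℓ, r) :: rs)

inductive LubSubC : (Pattern → Pattern) → List (Label × Pattern) →
    List (Label × Pattern) → List (Label × Pattern) → Prop where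
  | nil : ∀ {f}, LubSubC f [] [] []
  | extra : ∀ {f ℓ p ps qs rs}, LubSubC f ps qs rs →
      LubSubC f ((ℓ, p) :: ps) qs ((ℓ, f p) :: rs)
  | cons : ∀ {f ℓ p q r ps qs rs}, Lub p q r → LubSubC f ps qs rs →
      LubSubC f ((ℓ, p) :: ps) ((ℓ, q) :: qs) ((ℓ, r) :: rs)

inductive LubMergeC : (Pattern → Pattern) → (Pattern → Pattern) →
    List (Label × Pattern) → List (Label × Pattern) →
    List (Label × Pattern) → Prop where
  | nil : ∀ {f g}, LubMergeC f g [] [] []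
  | left : ∀ {f g ℓ p ps qs rs}, LubMergeC f g ps qs rs →
      LubMergeC f g ((ℓ, p) :: ps) qs ((ℓ, f p) :: rs)
  | right : ∀ {f g ℓ q ps qs rs}, LubMergeC f g ps qs rs →
      LubMergeC f g ps ((ℓ, q) :: qs) ((ℓ, g q) :: rs)
  | both : ∀ {f g ℓ p q r ps qs rs}, Lub p q r → LubMergeC f g ps qs rs →
      LubMergeC f g ((ℓ, p) :: ps) ((ℓ, q) :: qs) ((ℓ, r) :: rs)
end

/-- The pattern order: `p ⊑ p'` is defined as `p ⊔ p' = p'`. -/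
def PLE (p p' : Pattern) : Prop := Lub p p' p'

/-- Disjoint union `p ⊎ p'` of set patterns (Figure 5),
as a relation `PUnion p p' r`.  Defined only when the domains are
prefix-disjoint. -/
inductive PUnion : Pattern → Pattern → Pattern → Prop where
  | hh : PUnion .hole .hole .hole
  | hd : PUnion .hole .diamond .hole
  | dh : PUnion .diamond .hole .hole
  | dd : PUnion .diamond .diamond .diamond
  | collH : ∀ {ps}, PUnion (.coll ps) .hole (.collHole ps)
  | hColl : ∀ {ps}, PUnion .hole (.coll ps) (.collHole ps)
  | collD : ∀ {ps}, PUnion (.coll ps) .diamond (.collDiamond ps)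
  | dColl : ∀ {ps}, PUnion .diamond (.coll ps) (.collDiamond ps)
  | collHoleH : ∀ {ps}, PUnion (.collHole ps) .hole (.collHole ps)
  | hCollHole : ∀ {ps}, PUnion .hole (.collHole ps) (.collHole ps)
  | collDiamondH : ∀ {ps}, PUnion (.collDiamond ps) .hole (.collHole ps)
  | hCollDiamond : ∀ {ps}, PUnion .hole (.collDiamond ps) (.collHole ps)
  | collDiamondD : ∀ {ps}, PUnion (.collDiamond ps) .diamond (.collDiamond ps)
  | dCollDiamond : ∀ {ps}, PUnion .diamond (.collDiamond ps) (.collDiamond ps)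
  | collHoleD : ∀ {ps}, PUnion (.collHole ps) .diamond (.collHole ps)
  | dCollHole : ∀ {ps}, PUnion .diamond (.collHole ps) (.collHole ps)
  | cc : ∀ {ps qs}, PrefixDisjoint (domOf ps) (domOf qs) →
      PUnion (.coll ps) (.coll qs) (.coll (ps ++ qs))
  | cch : ∀ {ps qs}, PrefixDisjoint (domOf ps) (domOf qs) →
      PUnion (.coll ps) (.collHole qs) (.collHole (ps ++ qs))
  | chc : ∀ {ps qs}, PrefixDisjoint (domOf ps) (domOf qs) →
      PUnion (.collHole ps) (.coll qs) (.collHole (ps ++ qs))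
  | ccd : ∀ {ps qs}, PrefixDisjoint (domOf ps) (domOf qs) →
      PUnion (.coll ps) (.collDiamond qs) (.collDiamond (ps ++ qs))
  | cdc : ∀ {ps qs}, PrefixDisjoint (domOf ps) (domOf qs) →
      PUnion (.collDiamond ps) (.coll qs) (.collDiamond (ps ++ qs))
  | chch : ∀ {ps qs}, PrefixDisjoint (domOf ps) (domOf qs) →
      PUnion (.collHole ps) (.collHole qs) (.collHole (ps ++ qs))
  | chcd : ∀ {ps qs}, PrefixDisjoint (domOf ps) (domOf qs) →
      PUnion (.collHole ps) (.collDiamond qs) (.collHole (ps ++ qs))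
  | cdch : ∀ {ps qs}, PrefixDisjoint (domOf ps) (domOf qs) →
      PUnion (.collDiamond ps) (.collHole qs) (.collHole (ps ++ qs))
  | cdcd : ∀ {ps qs}, PrefixDisjoint (domOf ps) (domOf qs) →
      PUnion (.collDiamond ps) (.collDiamond qs) (.collDiamond (ps ++ qs))

open scoped Classical in
/-- Restriction `p|_L` of a set pattern: keep only the labeled components
whose label has a prefix in `L`. -/
noncomputable def Pattern.restrict (L : Set Label) : Pattern → Pattern
  | .coll ps => .coll (ps.filter fun q => decide (∃ y ∈ L, y <+: q.1))
  | .collHole ps => .collHole (ps.filter fun q => decide (∃ y ∈ L, y <+: q.1))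
  | .collDiamond ps => .collDiamond (ps.filter fun q => decide (∃ y ∈ L, y <+: q.1))
  | p => p

/-- Strip the prefix `ℓ` from `ℓ'`, if `ℓ` is a prefix of `ℓ'`. -/
def stripPrefix (ℓ ℓ' : Label) : Option Label :=
  if ℓ <+: ℓ' then some (ℓ'.drop ℓ.length) else none

/-- Set pattern projection `p[ℓ]`. -/
def Pattern.projL (ℓ : Label) : Pattern → Pattern
  | .hole => .hole
  | .diamond => .diamond
  | .coll ps => .coll (ps.filterMap fun q => (stripPrefix ℓ q.1).map ((·, q.2)))
  | .collHole ps =>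
      .collHole (ps.filterMap fun q => (stripPrefix ℓ q.1).map ((·, q.2)))
  | .collDiamond ps =>
      .collDiamond (ps.filterMap fun q => (stripPrefix ℓ q.1).map ((·, q.2)))
  | _ => .hole

/-- Singleton projection `p.ε`. -/
def Pattern.sngProj : Pattern → Pattern
  | .hole => .hole
  | .diamond => .diamond
  | .coll ps => (ps.lookup []).getD .hole
  | .collHole ps => (ps.lookup []).getD .hole
  | .collDiamond ps => (ps.lookup []).getD .diamond
  | _ => .hole

/-- Record pattern projection `p.A`. -/
def Pattern.projA (A : FName) : Pattern → Pattern
  | .hole => .hole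
  | .diamond => .diamond
  | .rcd ps => (ps.lookup A).getD .hole
  | .rcdHole ps => (ps.lookup A).getD .hole
  | .rcdDiamond ps => (ps.lookup A).getD .diamond
  | _ => .hole


/-!
On collections, `□` behaves as `{} ∪̇ □` and `◇` as `{} ∪̇ ◇`, and `v ∼_p v'` survives
weakening `p` along `{ℓᵢ.pᵢ} ⊑ {ℓᵢ.pᵢ} ∪̇ ◇ ⊑ {ℓᵢ.pᵢ} ∪̇ □`. After these weakenings every
case of `p₁ ⊎ p₂` is a union of two set patterns of the same kind, and each of the three
list relations underlying `∼` on set patterns is closed under concatenation.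
-/

theorem SimListC.toSimSubEqC {ps w w'} : SimListC ps w w' → SimSubEqC ps w w'
  | .nil => .nil
  | .cons hp h => .cons hp h.toSimSubEqC

theorem SimSubEqC.toSimSubC {ps w w'} : SimSubEqC ps w w' → SimSubC ps w w'
  | .nil => .nil
  | .skip h => .skipL (.skipR h.toSimSubC)
  | .cons hp h => .cons hp h.toSimSubC

theorem SimSubC.nil_left : ∀ w w' : List (Label × Value), SimSubC [] w w'
  | [], [] => .nil
  | _ :: w, w' => .skipL (SimSubC.nil_left w w')
  | [], _ :: w' => .skipR (SimSubC.nil_left [] w')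

theorem SimSubEqC.nil_refl : ∀ w : List (Label × Value), SimSubEqC [] w w
  | [] => .nil
  | _ :: w => .skip (SimSubEqC.nil_refl w)

theorem SimListC.append {ps qs w₁ w₁' w₂ w₂'} (h₁ : SimListC ps w₁ w₁')
    (h₂ : SimListC qs w₂ w₂') : SimListC (ps ++ qs) (w₁ ++ w₂) (w₁' ++ w₂') :=
  match h₁ with
  | .nil => h₂
  | .cons hp h => .cons hp (h.append h₂)

theorem SimSubEqC.append {ps qs w₁ w₁' w₂ w₂'} (h₁ : SimSubEqC ps w₁ w₁')
    (h₂ : SimSubEqC qs w₂ w₂') : SimSubEqC (ps ++ qs) (w₁ ++ w₂) (w₁' ++ w₂') :=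
  match h₁ with
  | .nil => h₂
  | .skip h => .skip (h.append h₂)
  | .cons hp h => .cons hp (h.append h₂)

theorem SimSubC.append {ps qs w₁ w₁' w₂ w₂'} (h₁ : SimSubC ps w₁ w₁')
    (h₂ : SimSubC qs w₂ w₂') : SimSubC (ps ++ qs) (w₁ ++ w₂) (w₁' ++ w₂') :=
  match h₁ with
  | .nil => h₂
  | .skipL h => .skipL (h.append h₂)
  | .skipR h => .skipR (h.append h₂)
  | .cons hp h => .cons hp (h.append h₂)

namespace Sim

variable {ps qs : List (Label × Pattern)} {w w' w₁ w₁' w₂ w₂' : List (Label × Value)}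

theorem collHole_nil (w w' : List (Label × Value)) :
    Sim (.collHole []) (.coll w) (.coll w') :=
  .collHole (SimSubC.nil_left w w')

theorem collDiamond_nil_of_diamond (h : Sim .diamond (.coll w) (.coll w')) :
    Sim (.collDiamond []) (.coll w) (.coll w') := by
  cases h
  exact .collDiamond (SimSubEqC.nil_refl w)

theorem collDiamond_of_coll (h : Sim (.coll ps) (.coll w) (.coll w')) :
    Sim (.collDiamond ps) (.coll w) (.coll w') := by
  cases h with
  | coll h => exact .collDiamond h.toSimSubEqC

theorem collHole_of_collDiamond (h : Sim (.collDiamond ps) (.coll w) (.coll w')) :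
    Sim (.collHole ps) (.coll w) (.coll w') := by
  cases h with
  | collDiamond h => exact .collHole h.toSimSubC

theorem collHole_of_coll (h : Sim (.coll ps) (.coll w) (.coll w')) :
    Sim (.collHole ps) (.coll w) (.coll w') :=
  h.collDiamond_of_coll.collHole_of_collDiamond

theorem coll_append (h₁ : Sim (.coll ps) (.coll w₁) (.coll w₁'))
    (h₂ : Sim (.coll qs) (.coll w₂) (.coll w₂')) :
    Sim (.coll (ps ++ qs)) (.coll (w₁ ++ w₂)) (.coll (w₁' ++ w₂')) := by
  cases h₁ with
  | coll h₁ => cases h₂ with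
    | coll h₂ => exact .coll (h₁.append h₂)

theorem collDiamond_append (h₁ : Sim (.collDiamond ps) (.coll w₁) (.coll w₁'))
    (h₂ : Sim (.collDiamond qs) (.coll w₂) (.coll w₂')) :
    Sim (.collDiamond (ps ++ qs)) (.coll (w₁ ++ w₂)) (.coll (w₁' ++ w₂')) := by
  cases h₁ with
  | collDiamond h₁ => cases h₂ with
    | collDiamond h₂ => exact .collDiamond (h₁.append h₂)

theorem collHole_append (h₁ : Sim (.collHole ps) (.coll w₁) (.coll w₁'))
    (h₂ : Sim (.collHole qs) (.coll w₂) (.coll w₂')) :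
    Sim (.collHole (ps ++ qs)) (.coll (w₁ ++ w₂)) (.coll (w₁' ++ w₂')) := by
  cases h₁ with
  | collHole h₁ => cases h₂ with
    | collHole h₂ => exact .collHole (h₁.append h₂)

end Sim

/-- Lemma 4.4(1): pattern equivalence is compatible with disjoint union of
labeled collections. -/
theorem sim_punion
    (p₁ p₂ p : Pattern) (w₁ w₂ w₁' w₂' : List (Label × Value))
    (hm₁ : Matches p₁ (.coll w₁)) (hm₂ : Matches p₂ (.coll w₂))
    (hs₁ : Sim p₁ (.coll w₁) (.coll w₁')) (hs₂ : Sim p₂ (.coll w₂) (.coll w₂'))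
    (hu : PUnion p₁ p₂ p)
    (hc₁ : IsPrefixCode (domOf w₁)) (hc₂ : IsPrefixCode (domOf w₂))
    (hc₁' : IsPrefixCode (domOf w₁')) (hc₂' : IsPrefixCode (domOf w₂'))
    (hd : PrefixDisjoint (domOf w₁) (domOf w₂))
    (hd' : PrefixDisjoint (domOf w₁') (domOf w₂')) :
    Sim p (.coll (w₁ ++ w₂)) (.coll (w₁' ++ w₂')) := by
  have hole₁ := Sim.collHole_nil w₁ w₁'
  have hole₂ := Sim.collHole_nil w₂ w₂'
  cases hu with
  | hh | hd | dh => exact .hole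
  | dd => cases hs₁; cases hs₂; exact .diamond
  | collH => simpa only [List.append_nil] using
      hs₁.collHole_of_coll.collHole_append hole₂
  | hColl => exact hole₁.collHole_append hs₂.collHole_of_coll
  | collD => simpa only [List.append_nil] using
      hs₁.collDiamond_of_coll.collDiamond_append hs₂.collDiamond_nil_of_diamond
  | dColl => exact hs₁.collDiamond_nil_of_diamond.collDiamond_append hs₂.collDiamond_of_coll
  | collHoleH => simpa only [List.append_nil] using hs₁.collHole_append hole₂
  | hCollHole => exact hole₁.collHole_append hs₂
  | collDiamondH => simpa only [List.append_nil] using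
      hs₁.collHole_of_collDiamond.collHole_append hole₂
  | hCollDiamond => exact hole₁.collHole_append hs₂.collHole_of_collDiamond
  | collDiamondD => simpa only [List.append_nil] using
      hs₁.collDiamond_append hs₂.collDiamond_nil_of_diamond
  | dCollDiamond => exact hs₁.collDiamond_nil_of_diamond.collDiamond_append hs₂
  | collHoleD => simpa only [List.append_nil] using
      hs₁.collHole_append hs₂.collDiamond_nil_of_diamond.collHole_of_collDiamond
  | dCollHole =>
    exact hs₁.collDiamond_nil_of_diamond.collHole_of_collDiamond.collHole_append hs₂
  | cc => exact hs₁.coll_append hs₂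
  | cch => exact hs₁.collHole_of_coll.collHole_append hs₂
  | chc => exact hs₁.collHole_append hs₂.collHole_of_coll
  | ccd => exact hs₁.collDiamond_of_coll.collDiamond_append hs₂
  | cdc => exact hs₁.collDiamond_append hs₂.collDiamond_of_coll
  | chch => exact hs₁.collHole_append hs₂
  | chcd => exact hs₁.collHole_append hs₂.collHole_of_collDiamond
  | cdch => exact hs₁.collHole_of_collDiamond.collHole_append hs₂
  | cdcd => exact hs₁.collDiamond_append hs₂
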